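/- arXiv:2503.18391 — 8 statements merged into one kernel-verified Lean document; each statement's English description precedes it below -/
import Mathlib

section
/- The generalized Moreau envelope 𝒜 is convex, differentiable, and (1/q)-smooth with respect to the Euclidean norm: for all x1, x2 ∈ ℝ^d, 𝒜(x2) ≤ 𝒜(x1) + ⟨∇𝒜(x1), x2 − x1⟩ + (1/(2q))‖x2 − x1‖₂², where ⟨·,·⟩ is the standard inner product. -/
open scoped RealInnerProductSpace

set_option maxHeartbeats 1000000 in
/-- the generalized Moreau envelope
`𝒜(x) = inf_v { (1/2) N(v)² + (1/(2q)) ‖x - v‖₂² }` (with `N` an arbitrary norm on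
`ℝ^d` equivalent to the Euclidean norm) is convex, differentiable, and `(1/q)`-smooth
with respect to the Euclidean norm. -/
theorem stmt_3
    (d : ℕ)
    (N : Seminorm ℝ (EuclideanSpace ℝ (Fin d))) (hNdef : ∀ x, N x = 0 → x = 0)
    (l u : ℝ) (hl0 : 0 < l) (hl1 : l ≤ 1) (hu1 : 1 ≤ u)
    (hl : ∀ x : EuclideanSpace ℝ (Fin d), l * N x ≤ ‖x‖)
    (hu : ∀ x : EuclideanSpace ℝ (Fin d), ‖x‖ ≤ u * N x)
    (q : ℝ) (hq : 0 < q)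
    (A : EuclideanSpace ℝ (Fin d) → ℝ)
    (hA : ∀ x, A x = ⨅ v : EuclideanSpace ℝ (Fin d),
      (1 / 2 * (N v) ^ 2 + 1 / (2 * q) * ‖x - v‖ ^ 2)) :
    ConvexOn ℝ Set.univ A ∧ Differentiable ℝ A ∧
    ∀ x1 x2, A x2 ≤ A x1 + (inner ℝ (gradient A x1) (x2 - x1) : ℝ)
        + 1 / (2 * q) * ‖x2 - x1‖ ^ 2 := by
  classical
  set c : ℝ := 1 / (2 * q) with hcdef
  have hc0 : 0 < c := by positivity
  set f : EuclideanSpace ℝ (Fin d) → ℝ := fun v => 1 / 2 * (N v) ^ 2 with hfdef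
  set h : EuclideanSpace ℝ (Fin d) → EuclideanSpace ℝ (Fin d) → ℝ :=
    fun x v => f v + c * ‖x - v‖ ^ 2 with hhdef
  have hA' : ∀ x, A x = ⨅ v, h x v := by
    intro x; rw [hA x]
  have hf0 : ∀ v, 0 ≤ f v := fun v => by
    simp only [hfdef]; positivity
  have hh0 : ∀ x v, 0 ≤ h x v := fun x v => by
    have := hf0 v
    simp only [hhdef]; positivity
  have hbdd : ∀ x, BddBelow (Set.range (h x)) := fun x =>
    ⟨0, by rintro _ ⟨v, rfl⟩; exact hh0 x v⟩
  -- continuity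
  have hNcont : Continuous fun v : EuclideanSpace ℝ (Fin d) => (N v : ℝ) := by
    have : LipschitzWith (Real.toNNReal l⁻¹) fun v : EuclideanSpace ℝ (Fin d) => (N v : ℝ) := by
      refine LipschitzWith.of_dist_le_mul fun a b => ?_
      rw [Real.dist_eq, dist_eq_norm]
      have h1 : |N a - N b| ≤ N (a - b) := abs_sub_map_le_sub N a b
      have h2 : l * N (a - b) ≤ ‖a - b‖ := hl _
      have h3 : N (a - b) ≤ l⁻¹ * ‖a - b‖ := by
        rw [le_inv_mul_iff₀ hl0]; linarith
      have h4 : ((Real.toNNReal l⁻¹ : NNReal) : ℝ) = l⁻¹ :=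
        Real.coe_toNNReal _ (by positivity)
      rw [h4]; linarith
    exact this.continuous
  have hhcont : ∀ x, Continuous (h x) := by
    intro x
    have c1 : Continuous f := by
      simp only [hfdef]; exact continuous_const.mul (hNcont.pow 2)
    have c2 : Continuous fun v : EuclideanSpace ℝ (Fin d) => c * ‖x - v‖ ^ 2 :=
      continuous_const.mul (((continuous_const.sub continuous_id).norm).pow 2)
    simp only [hhdef]; exact c1.add c2
  -- existence of minimizers
  have hmin : ∀ x, A x = ⨅ v, h x v ∧ ∃ p, (A x = h x p) ∧ ∀ v, h x p ≤ h x v := by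
    intro x
    set R : ℝ := Real.sqrt ((f x + 1) / c) with hRdef
    have hfx1 : 0 ≤ (f x + 1) / c := by positivity
    have hR2 : c * R ^ 2 = f x + 1 := by
      rw [hRdef, Real.sq_sqrt hfx1]; field_simp
    have hxK : x ∈ Metric.closedBall x R :=
      Metric.mem_closedBall_self (Real.sqrt_nonneg _)
    obtain ⟨p, hpK, hpmin⟩ := (isCompact_closedBall x R).exists_isMinOn
      ⟨x, hxK⟩ ((hhcont x).continuousOn)
    have hxx : h x x = f x := by simp [hhdef]
    have hpx : h x p ≤ f x := hxx ▸ hpmin hxK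
    have hmin' : ∀ v, h x p ≤ h x v := by
      intro v
      by_cases hv : v ∈ Metric.closedBall x R
      · exact hpmin hv
      · have hd : R ≤ ‖x - v‖ := by
          rw [Metric.mem_closedBall, not_le, dist_comm, dist_eq_norm] at hv
          exact hv.le
        have h5 : c * R ^ 2 ≤ c * ‖x - v‖ ^ 2 := by
          apply mul_le_mul_of_nonneg_left _ hc0.le
          exact pow_le_pow_left₀ (Real.sqrt_nonneg _) hd 2
        have h6 : h x v = f v + c * ‖x - v‖ ^ 2 := by simp [hhdef]
        have := hf0 v
        rw [h6]; rw [hR2] at h5; linarith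
    refine ⟨hA' x, p, ?_, hmin'⟩
    rw [hA' x]
    exact le_antisymm (ciInf_le (hbdd x) p) (le_ciInf hmin')
  choose _ P hP1 hP2 using hmin
  -- convexity
  have hAconv : ConvexOn ℝ Set.univ A := by
    refine ⟨convex_univ, ?_⟩
    intro x1 _ x2 _ t s ht hs hts
    have h1 : A (t • x1 + s • x2) ≤ h (t • x1 + s • x2) (t • P x1 + s • P x2) := by
      rw [hA' _]; exact ciInf_le (hbdd _) _
    have hNc : N (t • P x1 + s • P x2) ≤ t * N (P x1) + s * N (P x2) := by
      calc N (t • P x1 + s • P x2) ≤ N (t • P x1) + N (s • P x2) := map_add_le_add N _ _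
        _ = t * N (P x1) + s * N (P x2) := by
            rw [map_smul_eq_mul, map_smul_eq_mul, Real.norm_eq_abs, Real.norm_eq_abs,
              abs_of_nonneg ht, abs_of_nonneg hs]
    have hfc : f (t • P x1 + s • P x2) ≤ t * f (P x1) + s * f (P x2) := by
      have h0 := apply_nonneg N (t • P x1 + s • P x2)
      have h0a := apply_nonneg N (P x1)
      have h0b := apply_nonneg N (P x2)
      simp only [hfdef]
      nlinarith [sq_nonneg (N (P x1) - N (P x2)), mul_nonneg ht hs]
    have heq : (t • x1 + s • x2) - (t • P x1 + s • P x2)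
        = t • (x1 - P x1) + s • (x2 - P x2) := by module
    have hnc : ‖(t • x1 + s • x2) - (t • P x1 + s • P x2)‖
        ≤ t * ‖x1 - P x1‖ + s * ‖x2 - P x2‖ := by
      rw [heq]
      calc ‖t • (x1 - P x1) + s • (x2 - P x2)‖
          ≤ ‖t • (x1 - P x1)‖ + ‖s • (x2 - P x2)‖ := norm_add_le _ _
        _ = t * ‖x1 - P x1‖ + s * ‖x2 - P x2‖ := by
            rw [norm_smul, norm_smul, Real.norm_eq_abs, Real.norm_eq_abs,
              abs_of_nonneg ht, abs_of_nonneg hs]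
    have hnc2 : c * ‖(t • x1 + s • x2) - (t • P x1 + s • P x2)‖ ^ 2
        ≤ t * (c * ‖x1 - P x1‖ ^ 2) + s * (c * ‖x2 - P x2‖ ^ 2) := by
      have h0 := norm_nonneg ((t • x1 + s • x2) - (t • P x1 + s • P x2))
      have h0a := norm_nonneg (x1 - P x1)
      have h0b := norm_nonneg (x2 - P x2)
      have hsq : ‖(t • x1 + s • x2) - (t • P x1 + s • P x2)‖ ^ 2
          ≤ t * ‖x1 - P x1‖ ^ 2 + s * ‖x2 - P x2‖ ^ 2 := by
        nlinarith [mul_self_le_mul_self h0 hnc,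
          mul_nonneg (mul_nonneg ht hs) (sq_nonneg (‖x1 - P x1‖ - ‖x2 - P x2‖))]
      nlinarith [mul_le_mul_of_nonneg_left hsq hc0.le]
    have h2 : h (t • x1 + s • x2) (t • P x1 + s • P x2)
        ≤ t * h x1 (P x1) + s * h x2 (P x2) := by
      simp only [hhdef]; linarith
    calc A (t • x1 + s • x2) ≤ t * h x1 (P x1) + s * h x2 (P x2) := le_trans h1 h2
      _ = t * A x1 + s * A x2 := by rw [← hP1 x1, ← hP1 x2]
  -- the gradient candidate
  set g : EuclideanSpace ℝ (Fin d) → EuclideanSpace ℝ (Fin d) :=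
    fun x => q⁻¹ • (x - P x) with hgdef
  have h2q : q⁻¹ = 2 * c := by rw [hcdef]; field_simp
  have keybd : ∀ x y, A y ≤ A x + (inner ℝ (g x) (y - x) : ℝ) + c * ‖y - x‖ ^ 2 := by
    intro x y
    have h1 : A y ≤ h y (P x) := by rw [hA' y]; exact ciInf_le (hbdd y) (P x)
    have h2 : A x = f (P x) + c * ‖x - P x‖ ^ 2 := by
      have := hP1 x; simpa [hhdef] using this
    have hsplit : y - P x = (y - x) + (x - P x) := by abel
    have hexp : ‖y - P x‖ ^ 2
        = ‖y - x‖ ^ 2 + 2 * (inner ℝ (y - x) (x - P x) : ℝ) + ‖x - P x‖ ^ 2 := by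
      rw [hsplit, norm_add_sq_real]
    have hinner : (inner ℝ (g x) (y - x) : ℝ) = q⁻¹ * (inner ℝ (x - P x) (y - x) : ℝ) := by
      simp only [hgdef]; exact real_inner_smul_left _ _ _
    have hsymm : (inner ℝ (x - P x) (y - x) : ℝ) = (inner ℝ (y - x) (x - P x) : ℝ) :=
      real_inner_comm _ _
    have h3 : h y (P x) = f (P x) + c * ‖y - P x‖ ^ 2 := by simp [hhdef]
    rw [h3, hexp] at h1
    rw [h2, hinner, hsymm, h2q]
    linarith
  have keylb : ∀ x v, A x + (inner ℝ (g x) (v - x) : ℝ) - c * ‖v - x‖ ^ 2 ≤ A v := by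
    intro x v
    have hmid : (1/2 : ℝ) • v + (1/2 : ℝ) • (x + (x - v)) = x := by module
    have hconv := hAconv.2 (Set.mem_univ v) (Set.mem_univ (x + (x - v)))
      (by norm_num : (0:ℝ) ≤ 1/2) (by norm_num : (0:ℝ) ≤ 1/2) (by norm_num)
    rw [hmid, smul_eq_mul, smul_eq_mul] at hconv
    have hub := keybd x (x + (x - v))
    have e1 : (x + (x - v)) - x = -(v - x) := by module
    rw [e1] at hub
    simp only [inner_neg_right, norm_neg] at hub
    linarith
  have hgrad : ∀ x, HasGradientAt A (g x) x := by
    intro x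
    rw [hasGradientAt_iff_isLittleO, Asymptotics.isLittleO_iff]
    intro ε hε
    have hev : ∀ᶠ y in nhds x, ‖y - x‖ ≤ ε / c := by
      filter_upwards [Metric.ball_mem_nhds x (show 0 < ε / c by positivity)] with y hy
      rw [Metric.mem_ball, dist_eq_norm] at hy
      linarith
    filter_upwards [hev] with y hy
    have hub := keybd x y
    have hlb := keylb x y
    have habs : |A y - A x - (inner ℝ (g x) (y - x) : ℝ)| ≤ c * ‖y - x‖ ^ 2 :=
      abs_le.2 ⟨by linarith, by linarith⟩
    rw [Real.norm_eq_abs]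
    calc |A y - A x - (inner ℝ (g x) (y - x) : ℝ)| ≤ c * ‖y - x‖ ^ 2 := habs
      _ = (c * ‖y - x‖) * ‖y - x‖ := by ring
      _ ≤ ε * ‖y - x‖ := by
          apply mul_le_mul_of_nonneg_right _ (norm_nonneg _)
          calc c * ‖y - x‖ ≤ c * (ε / c) := mul_le_mul_of_nonneg_left hy hc0.le
            _ = ε := by field_simp
  have hdiff : Differentiable ℝ A := fun x => (hgrad x).differentiableAt
  refine ⟨hAconv, hdiff, fun x1 x2 => ?_⟩
  rw [(hgrad x1).gradient]
  exact keybd x1 x2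
end

section
/- For all x ∈ ℝ^d, (1 + q/u²)·𝒜(x) ≤ (1/2)‖x‖² ≤ (1 + q/ℓ²)·𝒜(x). -/
lemma aux_coef (q u : ℝ) (hq : 0 < q) (hu : 0 < u) :
    (1 + q / u ^ 2) * ((u ^ 2 / (q + u ^ 2)) ^ 2 / 2
      + (1 - u ^ 2 / (q + u ^ 2)) ^ 2 * u ^ 2 / (2 * q)) = 1 / 2 := by
  have hqu : (0:ℝ) < q + u ^ 2 := by positivity
  field_simp
  ring

lemma aux_lower (q l a b c : ℝ) (hq : 0 < q) (hl : 0 < l)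
    (ha : 0 ≤ a) (hb : 0 ≤ b) (hc : 0 ≤ c) (h : c ≤ a + b / l) :
    1 / 2 * c ^ 2 ≤ (1 + q / l ^ 2) * (1 / 2 * a ^ 2 + 1 / (2 * q) * b ^ 2) := by
  have hab : (0:ℝ) ≤ a + b / l := by positivity
  have hsq : c ^ 2 ≤ (a + b / l) ^ 2 := by nlinarith
  have hdiff : 2 * ((1 + q / l ^ 2) * (1 / 2 * a ^ 2 + 1 / (2 * q) * b ^ 2))
      - (a + b / l) ^ 2 = (q * a - l * b) ^ 2 / (q * l ^ 2) := by
    field_simp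
    ring
  have hnn : (0:ℝ) ≤ (q * a - l * b) ^ 2 / (q * l ^ 2) := by positivity
  nlinarith [hdiff, hnn, hsq]

/-- sandwich bound for the generalized Moreau envelope:
`(1 + q/u²) 𝒜(x) ≤ (1/2) N(x)² ≤ (1 + q/ℓ²) 𝒜(x)` for all `x`. -/
theorem stmt_4
    (d : ℕ)
    (N : Seminorm ℝ (EuclideanSpace ℝ (Fin d))) (hNdef : ∀ x, N x = 0 → x = 0)
    (l u : ℝ) (hl0 : 0 < l) (hl1 : l ≤ 1) (hu1 : 1 ≤ u)
    (hl : ∀ x : EuclideanSpace ℝ (Fin d), l * N x ≤ ‖x‖)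
    (hu : ∀ x : EuclideanSpace ℝ (Fin d), ‖x‖ ≤ u * N x)
    (q : ℝ) (hq : 0 < q)
    (A : EuclideanSpace ℝ (Fin d) → ℝ)
    (hA : ∀ x, A x = ⨅ v : EuclideanSpace ℝ (Fin d),
      (1 / 2 * (N v) ^ 2 + 1 / (2 * q) * ‖x - v‖ ^ 2)) :
    ∀ x, (1 + q / u ^ 2) * A x ≤ 1 / 2 * (N x) ^ 2 ∧
      1 / 2 * (N x) ^ 2 ≤ (1 + q / l ^ 2) * A x := by
  intro x
  have hu0 : (0:ℝ) < u := lt_of_lt_of_le one_pos hu1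
  set f : EuclideanSpace ℝ (Fin d) → ℝ :=
    fun v => 1 / 2 * (N v) ^ 2 + 1 / (2 * q) * ‖x - v‖ ^ 2 with hf
  have hfnn : ∀ v, 0 ≤ f v := by
    intro v
    have h1 : (0:ℝ) ≤ N v := apply_nonneg N v
    have h2 : (0:ℝ) ≤ ‖x - v‖ := norm_nonneg _
    simp only [hf]
    positivity
  have hbdd : BddBelow (Set.range f) := ⟨0, by rintro _ ⟨v, rfl⟩; exact hfnn v⟩
  have hAx : A x = ⨅ v, f v := hA x
  have hNx0 : (0:ℝ) ≤ N x := apply_nonneg N x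
  constructor
  · -- upper bound
    set t : ℝ := u ^ 2 / (q + u ^ 2) with ht
    have hqu : (0:ℝ) < q + u ^ 2 := by positivity
    have ht0 : 0 ≤ t := by positivity
    have ht1 : t ≤ 1 := by
      rw [ht, div_le_one hqu]; nlinarith
    have hAle : A x ≤ f (t • x) := by
      rw [hAx]; exact ciInf_le hbdd _
    have hNsmul : N (t • x) = t * N x := by
      rw [map_smul_eq_mul, Real.norm_eq_abs, abs_of_nonneg ht0]
    have hnormsmul : ‖x - t • x‖ = (1 - t) * ‖x‖ := by
      have hx : x - t • x = (1 - t) • x := by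
        rw [sub_smul, one_smul]
      rw [hx, norm_smul, Real.norm_eq_abs, abs_of_nonneg (by linarith)]
    have hxu : ‖x‖ ≤ u * N x := hu x
    have hx0 : (0:ℝ) ≤ ‖x‖ := norm_nonneg x
    have hfle : f (t • x) ≤ (t ^ 2 / 2 + (1 - t) ^ 2 * u ^ 2 / (2 * q)) * (N x) ^ 2 := by
      simp only [hf, hNsmul, hnormsmul]
      have hsq : ‖x‖ ^ 2 ≤ u ^ 2 * (N x) ^ 2 := by nlinarith
      have h1t : (0:ℝ) ≤ (1 - t) ^ 2 := sq_nonneg _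
      have h3 : (0:ℝ) < 1 / (2 * q) := by positivity
      rw [mul_pow, mul_pow]
      have hmul : 1 / (2 * q) * ((1 - t) ^ 2 * ‖x‖ ^ 2) ≤
          1 / (2 * q) * ((1 - t) ^ 2 * (u ^ 2 * (N x) ^ 2)) :=
        mul_le_mul_of_nonneg_left (mul_le_mul_of_nonneg_left hsq h1t) (le_of_lt h3)
      have hring : (t ^ 2 / 2 + (1 - t) ^ 2 * u ^ 2 / (2 * q)) * (N x) ^ 2
          = 1 / 2 * (t ^ 2 * (N x) ^ 2)
            + 1 / (2 * q) * ((1 - t) ^ 2 * (u ^ 2 * (N x) ^ 2)) := by ring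
      rw [hring]
      linarith [hmul]
    have hcoef : (1 + q / u ^ 2) * (t ^ 2 / 2 + (1 - t) ^ 2 * u ^ 2 / (2 * q)) = 1 / 2 := by
      rw [ht]; exact aux_coef q u hq hu0
    have hpos : (0:ℝ) < 1 + q / u ^ 2 := by positivity
    calc (1 + q / u ^ 2) * A x ≤ (1 + q / u ^ 2) * f (t • x) :=
          mul_le_mul_of_nonneg_left hAle (le_of_lt hpos)
      _ ≤ (1 + q / u ^ 2) * ((t ^ 2 / 2 + (1 - t) ^ 2 * u ^ 2 / (2 * q)) * (N x) ^ 2) :=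
          mul_le_mul_of_nonneg_left hfle (le_of_lt hpos)
      _ = 1 / 2 * (N x) ^ 2 := by rw [← mul_assoc, hcoef]
  · -- lower bound
    have hcpos : (0:ℝ) < 1 + q / l ^ 2 := by positivity
    have key : ∀ v, 1 / 2 * (N x) ^ 2 ≤ (1 + q / l ^ 2) * f v := by
      intro v
      have htri : N x ≤ N v + N (x - v) := by
        have h := map_add_le_add N v (x - v)
        simpa [add_sub_cancel] using h
      have hNl : N (x - v) ≤ ‖x - v‖ / l := by
        rw [le_div_iff₀ hl0]
        have h := hl (x - v)
        linarith
      have hNxle : N x ≤ N v + ‖x - v‖ / l := le_trans htri (by linarith)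
      exact aux_lower q l (N v) ‖x - v‖ (N x) hq hl0 (apply_nonneg N v)
        (norm_nonneg _) hNx0 hNxle
    have hge : 1 / 2 * (N x) ^ 2 / (1 + q / l ^ 2) ≤ A x := by
      rw [hAx]
      apply le_ciInf
      intro v
      rw [div_le_iff₀ hcpos]
      calc 1 / 2 * (N x) ^ 2 ≤ (1 + q / l ^ 2) * f v := key v
        _ = f v * (1 + q / l ^ 2) := mul_comm _ _
    calc 1 / 2 * (N x) ^ 2
        = 1 / 2 * (N x) ^ 2 / (1 + q / l ^ 2) * (1 + q / l ^ 2) := by field_simp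
      _ ≤ A x * (1 + q / l ^ 2) := mul_le_mul_of_nonneg_right hge (le_of_lt hcpos)
      _ = (1 + q / l ^ 2) * A x := mul_comm _ _
end

section
/- There exists a norm ‖·‖_𝒜 on ℝ^d such that 𝒜(x) = (1/2)‖x‖_𝒜² for all x ∈ ℝ^d; equivalently, the function x ↦ √(2𝒜(x)) is a norm on ℝ^d. -/
lemma my_sqrt_add_le (a b : ℝ) (ha : 0 ≤ a) (hb : 0 ≤ b) :
    Real.sqrt (a + b) ≤ Real.sqrt a + Real.sqrt b := by
  have h1 : a + b ≤ (Real.sqrt a + Real.sqrt b) ^ 2 := by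
    have hsa := Real.sq_sqrt ha
    have hsb := Real.sq_sqrt hb
    nlinarith [mul_nonneg (Real.sqrt_nonneg a) (Real.sqrt_nonneg b)]
  calc Real.sqrt (a + b) ≤ Real.sqrt ((Real.sqrt a + Real.sqrt b) ^ 2) :=
        Real.sqrt_le_sqrt h1
    _ = Real.sqrt a + Real.sqrt b := by
        rw [Real.sqrt_sq (by positivity)]

lemma my_minkowski2 (k p r s t : ℝ) (hk : 0 < k) (hp : 0 ≤ p) (hr : 0 ≤ r)
    (hs : 0 ≤ s) (ht : 0 ≤ t) :
    (p + r) ^ 2 + k * (s + t) ^ 2 ≤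
      (Real.sqrt (p ^ 2 + k * s ^ 2) + Real.sqrt (r ^ 2 + k * t ^ 2)) ^ 2 := by
  set P := Real.sqrt (p ^ 2 + k * s ^ 2) with hPdef
  set R := Real.sqrt (r ^ 2 + k * t ^ 2) with hRdef
  have hP0 : 0 ≤ P := Real.sqrt_nonneg _
  have hR0 : 0 ≤ R := Real.sqrt_nonneg _
  have hP : P ^ 2 = p ^ 2 + k * s ^ 2 := Real.sq_sqrt (by positivity)
  have hR : R ^ 2 = r ^ 2 + k * t ^ 2 := Real.sq_sqrt (by positivity)
  have h1 : (p * r + k * (s * t)) ^ 2 ≤ (P * R) ^ 2 := by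
    have h2 : (P * R) ^ 2 = (p ^ 2 + k * s ^ 2) * (r ^ 2 + k * t ^ 2) := by
      rw [mul_pow, hP, hR]
    rw [h2]
    nlinarith [mul_nonneg hk.le (sq_nonneg (p * t - s * r))]
  have h3 : p * r + k * (s * t) ≤ P * R := by
    have hx0 : 0 ≤ p * r + k * (s * t) := by positivity
    have hy0 : 0 ≤ P * R := mul_nonneg hP0 hR0
    exact (pow_le_pow_iff_left₀ hx0 hy0 (by norm_num)).mp h1
  nlinarith [h3, hP, hR]

set_option maxHeartbeats 1000000

/-- there is a norm `‖·‖_𝒜` on `ℝ^d` with `𝒜(x) = (1/2)‖x‖_𝒜²`;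
equivalently, `x ↦ √(2𝒜(x))` is a norm. -/
theorem stmt_5
    (d : ℕ)
    (N : Seminorm ℝ (EuclideanSpace ℝ (Fin d))) (hNdef : ∀ x, N x = 0 → x = 0)
    (l u : ℝ) (hl0 : 0 < l) (hl1 : l ≤ 1) (hu1 : 1 ≤ u)
    (hl : ∀ x : EuclideanSpace ℝ (Fin d), l * N x ≤ ‖x‖)
    (hu : ∀ x : EuclideanSpace ℝ (Fin d), ‖x‖ ≤ u * N x)
    (q : ℝ) (hq : 0 < q)
    (A : EuclideanSpace ℝ (Fin d) → ℝ)
    (hA : ∀ x, A x = ⨅ v : EuclideanSpace ℝ (Fin d),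
      (1 / 2 * (N v) ^ 2 + 1 / (2 * q) * ‖x - v‖ ^ 2)) :
    ∃ nA : EuclideanSpace ℝ (Fin d) → ℝ,
      (∀ x, 0 ≤ nA x) ∧
      (∀ x, nA x = 0 ↔ x = 0) ∧
      (∀ x y, nA (x + y) ≤ nA x + nA y) ∧
      (∀ (c : ℝ) (x : EuclideanSpace ℝ (Fin d)), nA (c • x) = |c| * nA x) ∧
      (∀ x, A x = 1 / 2 * (nA x) ^ 2) ∧
      (∀ x, nA x = Real.sqrt (2 * A x)) := by
  set F : EuclideanSpace ℝ (Fin d) → EuclideanSpace ℝ (Fin d) → ℝ :=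
    fun x v => 1 / 2 * (N v) ^ 2 + 1 / (2 * q) * ‖x - v‖ ^ 2 with hFdef
  have hu0 : (0 : ℝ) < u := lt_of_lt_of_le one_pos hu1
  have hF0 : ∀ x v, 0 ≤ F x v := by
    intro x v
    have := apply_nonneg N v
    have := norm_nonneg (x - v)
    positivity
  have hbdd : ∀ x, BddBelow (Set.range (fun v => F x v)) := by
    intro x
    exact ⟨0, by rintro y ⟨v, rfl⟩; exact hF0 x v⟩
  have hAle : ∀ x v, A x ≤ F x v := by
    intro x v; rw [hA x]; exact ciInf_le (hbdd x) v
  have hA0 : ∀ x, 0 ≤ A x := by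
    intro x; rw [hA x]; exact le_ciInf (fun v => hF0 x v)
  have hAzero : A 0 = 0 := by
    refine le_antisymm ?_ (hA0 0)
    have := hAle 0 0
    simpa [hFdef, map_zero] using this
  have hexists : ∀ x ε, 0 < ε → ∃ v, F x v < A x + ε := by
    intro x ε hε
    apply exists_lt_of_ciInf_lt
    rw [← hA x]
    linarith
  -- lower bound: definiteness
  set m : ℝ := min (1 / (8 * u ^ 2)) (1 / (8 * q)) with hmdef
  have hm0 : 0 < m := lt_min (by positivity) (by positivity)
  have hlow : ∀ x v, m * ‖x‖ ^ 2 ≤ F x v := by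
    intro x v
    by_cases h : ‖x‖ / 2 ≤ ‖x - v‖
    · have h1 : m ≤ 1 / (8 * q) := min_le_right _ _
      have hx2 : ‖x‖ ^ 2 ≤ 4 * ‖x - v‖ ^ 2 := by
        rw [div_le_iff₀ (by norm_num)] at h
        nlinarith [norm_nonneg x, norm_nonneg (x - v)]
      have h2 : 1 / (8 * q) * ‖x‖ ^ 2 ≤ 1 / (2 * q) * ‖x - v‖ ^ 2 := by
        calc 1 / (8 * q) * ‖x‖ ^ 2 ≤ 1 / (8 * q) * (4 * ‖x - v‖ ^ 2) :=
              mul_le_mul_of_nonneg_left hx2 (by positivity)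
          _ = 1 / (2 * q) * ‖x - v‖ ^ 2 := by field_simp; ring
      have h3 : (0:ℝ) ≤ (N v) ^ 2 := sq_nonneg _
      have : m * ‖x‖ ^ 2 ≤ 1 / (8 * q) * ‖x‖ ^ 2 :=
        mul_le_mul_of_nonneg_right h1 (sq_nonneg _)
      simp only [hFdef]
      nlinarith
    · push_neg at h
      have hvx : ‖x‖ / 2 ≤ ‖v‖ := by
        have htr : ‖x‖ ≤ ‖x - v‖ + ‖v‖ := by
          calc ‖x‖ = ‖(x - v) + v‖ := by rw [sub_add_cancel]
            _ ≤ ‖x - v‖ + ‖v‖ := norm_add_le _ _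
        linarith
      have hNv : ‖v‖ ≤ u * N v := hu v
      have h1 : m ≤ 1 / (8 * u ^ 2) := min_le_left _ _
      have h2 : ‖x‖ ≤ 2 * u * N v := by
        nlinarith [norm_nonneg v, apply_nonneg N v]
      have h3 : m * ‖x‖ ^ 2 ≤ 1 / 2 * (N v) ^ 2 := by
        have hxn : (0:ℝ) ≤ ‖x‖ := norm_nonneg x
        have hNn : (0:ℝ) ≤ N v := apply_nonneg N v
        have hx2 : ‖x‖ ^ 2 ≤ 4 * u ^ 2 * (N v) ^ 2 := by nlinarith
        calc m * ‖x‖ ^ 2 ≤ 1 / (8 * u ^ 2) * ‖x‖ ^ 2 :=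
              mul_le_mul_of_nonneg_right h1 (sq_nonneg _)
          _ ≤ 1 / (8 * u ^ 2) * (4 * u ^ 2 * (N v) ^ 2) := by
              apply mul_le_mul_of_nonneg_left hx2 (by positivity)
          _ = 1 / 2 * (N v) ^ 2 := by field_simp; ring
      have h4 : (0:ℝ) ≤ 1 / (2 * q) * ‖x - v‖ ^ 2 := by positivity
      simp only [hFdef]
      linarith
  have hAdef : ∀ x, A x = 0 → x = 0 := by
    intro x hx
    have h1 : m * ‖x‖ ^ 2 ≤ A x := by
      rw [hA x]; exact le_ciInf (fun v => hlow x v)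
    rw [hx] at h1
    have h2 : ‖x‖ ^ 2 ≤ 0 := le_of_mul_le_mul_left (by linarith : m * ‖x‖ ^ 2 ≤ m * 0) hm0
    have h3 : ‖x‖ ^ 2 = 0 := le_antisymm h2 (sq_nonneg _)
    exact norm_eq_zero.mp (sq_eq_zero_iff.mp h3)
  -- homogeneity
  have hFsmul : ∀ (c : ℝ) x v, F (c • x) (c • v) = c ^ 2 * F x v := by
    intro c x v
    have h1 : N (c • v) = |c| * N v := by
      rw [map_smul_eq_mul]; simp [Real.norm_eq_abs]
    have h2 : ‖c • x - c • v‖ = |c| * ‖x - v‖ := by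
      rw [← smul_sub, norm_smul, Real.norm_eq_abs]
    simp only [hFdef, h1, h2, mul_pow, sq_abs]
    ring
  have hAsmul_le : ∀ (c : ℝ), c ≠ 0 → ∀ x, A (c • x) ≤ c ^ 2 * A x := by
    intro c hc x
    have hc2 : (0:ℝ) < c ^ 2 := by positivity
    apply le_of_forall_pos_le_add
    intro ε hε
    obtain ⟨v, hv⟩ := hexists x (ε / c ^ 2) (by positivity)
    calc A (c • x) ≤ F (c • x) (c • v) := hAle _ _
      _ = c ^ 2 * F x v := hFsmul c x v
      _ ≤ c ^ 2 * (A x + ε / c ^ 2) := by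
          apply mul_le_mul_of_nonneg_left hv.le hc2.le
      _ = c ^ 2 * A x + ε := by field_simp
  have hAsmul : ∀ (c : ℝ) x, A (c • x) = c ^ 2 * A x := by
    intro c x
    rcases eq_or_ne c 0 with rfl | hc
    · simp [hAzero]
    · refine le_antisymm (hAsmul_le c hc x) ?_
      have h1 : A x ≤ (c⁻¹) ^ 2 * A (c • x) := by
        have := hAsmul_le c⁻¹ (inv_ne_zero hc) (c • x)
        rwa [inv_smul_smul₀ hc] at this
      have hc2 : (0:ℝ) < c ^ 2 := by positivity
      calc c ^ 2 * A x ≤ c ^ 2 * ((c⁻¹) ^ 2 * A (c • x)) :=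
            mul_le_mul_of_nonneg_left h1 hc2.le
        _ = A (c • x) := by field_simp
  -- the norm
  refine ⟨fun x => Real.sqrt (2 * A x), ?_, ?_, ?_, ?_, ?_, ?_⟩
  · intro x; exact Real.sqrt_nonneg _
  · intro x
    constructor
    · intro hx
      have h1 : 2 * A x = 0 := by
        have := Real.sqrt_eq_zero (by linarith [hA0 x]) |>.mp hx
        linarith
      exact hAdef x (by linarith)
    · rintro rfl; simp [hAzero]
  · -- triangle inequality
    intro x y
    apply le_of_forall_pos_le_add
    intro δ hδ
    set ε : ℝ := δ ^ 2 / 8 with hεdef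
    have hε : 0 < ε := by positivity
    obtain ⟨v, hv⟩ := hexists x ε hε
    obtain ⟨w, hw⟩ := hexists y ε hε
    have hk : (0:ℝ) < 1 / q := by positivity
    set p := N v with hpd
    set r := N w with hrd
    set s := ‖x - v‖ with hsd
    set t := ‖y - w‖ with htd
    have hp : (0:ℝ) ≤ p := apply_nonneg N v
    have hr : (0:ℝ) ≤ r := apply_nonneg N w
    have hs : (0:ℝ) ≤ s := norm_nonneg _
    have ht : (0:ℝ) ≤ t := norm_nonneg _
    have hNvw : N (v + w) ≤ p + r := map_add_le_add N v w
    have hnrm : ‖x + y - (v + w)‖ ≤ s + t := by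
      have hrw : x + y - (v + w) = (x - v) + (y - w) := by abel
      rw [hrw]
      exact norm_add_le _ _
    have key1 : 2 * A (x + y) ≤ (p + r) ^ 2 + (1 / q) * (s + t) ^ 2 := by
      have h1 : A (x + y) ≤ F (x + y) (v + w) := hAle _ _
      have h2 : N (v + w) ^ 2 ≤ (p + r) ^ 2 := by
        apply pow_le_pow_left₀ (apply_nonneg N _) hNvw
      have h3 : ‖x + y - (v + w)‖ ^ 2 ≤ (s + t) ^ 2 := by
        apply pow_le_pow_left₀ (norm_nonneg _) hnrm
      have hF2 : 2 * F (x + y) (v + w) =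
          N (v + w) ^ 2 + (1 / q) * ‖x + y - (v + w)‖ ^ 2 := by
        simp only [hFdef]; field_simp
      have h4 : (1 / q) * ‖x + y - (v + w)‖ ^ 2 ≤ (1 / q) * (s + t) ^ 2 :=
        mul_le_mul_of_nonneg_left h3 hk.le
      calc 2 * A (x + y) ≤ 2 * F (x + y) (v + w) := by linarith
        _ = N (v + w) ^ 2 + (1 / q) * ‖x + y - (v + w)‖ ^ 2 := hF2
        _ ≤ (p + r) ^ 2 + (1 / q) * (s + t) ^ 2 := add_le_add h2 h4
    have key2 : (p + r) ^ 2 + (1 / q) * (s + t) ^ 2 ≤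
        (Real.sqrt (p ^ 2 + (1 / q) * s ^ 2) + Real.sqrt (r ^ 2 + (1 / q) * t ^ 2)) ^ 2 :=
      my_minkowski2 (1 / q) p r s t hk hp hr hs ht
    have hPF : p ^ 2 + (1 / q) * s ^ 2 = 2 * F x v := by
      simp only [hFdef]; field_simp; ring
    have hRF : r ^ 2 + (1 / q) * t ^ 2 = 2 * F y w := by
      simp only [hFdef]; field_simp; ring
    have hsum0 : 0 ≤ Real.sqrt (2 * F x v) + Real.sqrt (2 * F y w) := by positivity
    have key3 : Real.sqrt (2 * A (x + y)) ≤
        Real.sqrt (2 * F x v) + Real.sqrt (2 * F y w) := by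
      rw [hPF, hRF] at key2
      calc Real.sqrt (2 * A (x + y)) ≤
            Real.sqrt ((Real.sqrt (2 * F x v) + Real.sqrt (2 * F y w)) ^ 2) :=
            Real.sqrt_le_sqrt (le_trans key1 key2)
        _ = _ := Real.sqrt_sq hsum0
    have hPb : Real.sqrt (2 * F x v) ≤ Real.sqrt (2 * A x) + Real.sqrt (2 * ε) := by
      calc Real.sqrt (2 * F x v) ≤ Real.sqrt (2 * A x + 2 * ε) := by
            apply Real.sqrt_le_sqrt; linarith
        _ ≤ Real.sqrt (2 * A x) + Real.sqrt (2 * ε) :=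
            my_sqrt_add_le _ _ (by linarith [hA0 x]) (by linarith)
    have hRb : Real.sqrt (2 * F y w) ≤ Real.sqrt (2 * A y) + Real.sqrt (2 * ε) := by
      calc Real.sqrt (2 * F y w) ≤ Real.sqrt (2 * A y + 2 * ε) := by
            apply Real.sqrt_le_sqrt; linarith
        _ ≤ Real.sqrt (2 * A y) + Real.sqrt (2 * ε) :=
            my_sqrt_add_le _ _ (by linarith [hA0 y]) (by linarith)
    have hεval : Real.sqrt (2 * ε) = δ / 2 := by
      have : 2 * ε = (δ / 2) ^ 2 := by rw [hεdef]; ring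
      rw [this, Real.sqrt_sq (by linarith)]
    calc Real.sqrt (2 * A (x + y)) ≤
          Real.sqrt (2 * F x v) + Real.sqrt (2 * F y w) := key3
      _ ≤ Real.sqrt (2 * A x) + Real.sqrt (2 * ε) +
          (Real.sqrt (2 * A y) + Real.sqrt (2 * ε)) := add_le_add hPb hRb
      _ = Real.sqrt (2 * A x) + Real.sqrt (2 * A y) + δ := by rw [hεval]; ring
  · intro c x
    show Real.sqrt (2 * A (c • x)) = |c| * Real.sqrt (2 * A x)
    rw [hAsmul c x]
    have : 2 * (c ^ 2 * A x) = c ^ 2 * (2 * A x) := by ring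
    rw [this, Real.sqrt_mul (sq_nonneg c), Real.sqrt_sq_eq_abs]
  · intro x
    show A x = 1 / 2 * Real.sqrt (2 * A x) ^ 2
    rw [Real.sq_sqrt (by linarith [hA0 x])]
    ring
  · intro x; rfl
end

section
/- For all x1, x2 ∈ ℝ^d, ⟨∇𝒜(x1), x2⟩ ≤ √(2𝒜(x1))·√(2𝒜(x2)), where ⟨·,·⟩ is the standard inner product and ∇𝒜 is the gradient of the generalized Moreau envelope. -/
open Filter Topology

/-- Minkowski-type inequality in a weighted ℝ². -/
lemma minkowski2 (c a1 a2 b1 b2 : ℝ) (hc : 0 < c) (ha1 : 0 ≤ a1) (ha2 : 0 ≤ a2)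
    (hb1 : 0 ≤ b1) (hb2 : 0 ≤ b2) :
    (a1 + a2) ^ 2 + c * (b1 + b2) ^ 2
      ≤ (Real.sqrt (a1 ^ 2 + c * b1 ^ 2) + Real.sqrt (a2 ^ 2 + c * b2 ^ 2)) ^ 2 := by
  have hX : (0:ℝ) ≤ a1 ^ 2 + c * b1 ^ 2 := by positivity
  have hY : (0:ℝ) ≤ a2 ^ 2 + c * b2 ^ 2 := by positivity
  have hw : (0:ℝ) ≤ a1 * a2 + c * (b1 * b2) := by positivity
  have key : a1 * a2 + c * (b1 * b2)
      ≤ Real.sqrt (a1 ^ 2 + c * b1 ^ 2) * Real.sqrt (a2 ^ 2 + c * b2 ^ 2) := by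
    rw [← Real.sqrt_mul hX]
    rw [Real.le_sqrt hw (by positivity)]
    nlinarith [sq_nonneg (a1 * b2 - a2 * b1), hc.le]
  have h1 := Real.sq_sqrt hX
  have h2 := Real.sq_sqrt hY
  nlinarith [key, Real.sqrt_nonneg (a1 ^ 2 + c * b1 ^ 2), Real.sqrt_nonneg (a2 ^ 2 + c * b2 ^ 2)]

lemma sqrt_add_le'' (x y : ℝ) (hx : 0 ≤ x) (hy : 0 ≤ y) :
    Real.sqrt (x + y) ≤ Real.sqrt x + Real.sqrt y := by
  have h1 := Real.sq_sqrt hx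
  have h2 := Real.sq_sqrt hy
  have h3 := Real.sqrt_nonneg x
  have h4 := Real.sqrt_nonneg y
  have h5 : Real.sqrt (x + y) ≤ Real.sqrt ((Real.sqrt x + Real.sqrt y) ^ 2) :=
    Real.sqrt_le_sqrt (by nlinarith [mul_nonneg h3 h4])
  rwa [Real.sqrt_sq (by positivity)] at h5

set_option maxHeartbeats 1000000 in
/-- Cauchy–Schwarz-type bound for the generalized Moreau envelope:
`⟨∇𝒜(x1), x2⟩ ≤ √(2𝒜(x1)) √(2𝒜(x2))` for all `x1, x2`. -/
theorem stmt_6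
    (d : ℕ)
    (N : Seminorm ℝ (EuclideanSpace ℝ (Fin d))) (hNdef : ∀ x, N x = 0 → x = 0)
    (l u : ℝ) (hl0 : 0 < l) (hl1 : l ≤ 1) (hu1 : 1 ≤ u)
    (hl : ∀ x : EuclideanSpace ℝ (Fin d), l * N x ≤ ‖x‖)
    (hu : ∀ x : EuclideanSpace ℝ (Fin d), ‖x‖ ≤ u * N x)
    (q : ℝ) (hq : 0 < q)
    (A : EuclideanSpace ℝ (Fin d) → ℝ)
    (hA : ∀ x, A x = ⨅ v : EuclideanSpace ℝ (Fin d),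
      (1 / 2 * (N v) ^ 2 + 1 / (2 * q) * ‖x - v‖ ^ 2))
    (hdiff : Differentiable ℝ A) :
    ∀ x1 x2, (inner ℝ (gradient A x1) x2 : ℝ)
      ≤ Real.sqrt (2 * A x1) * Real.sqrt (2 * A x2) := by
  have hq2 : (0:ℝ) < 1 / (2 * q) := by positivity
  -- each term of the infimum is nonnegative
  have hterm : ∀ x v : EuclideanSpace ℝ (Fin d),
      0 ≤ 1 / 2 * (N v) ^ 2 + 1 / (2 * q) * ‖x - v‖ ^ 2 := by
    intro x v
    have := apply_nonneg N v
    positivity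
  have hbdd : ∀ x : EuclideanSpace ℝ (Fin d), BddBelow (Set.range fun v =>
      1 / 2 * (N v) ^ 2 + 1 / (2 * q) * ‖x - v‖ ^ 2) := by
    intro x
    exact ⟨0, by rintro y ⟨v, rfl⟩; exact hterm x v⟩
  have hAle : ∀ x v : EuclideanSpace ℝ (Fin d),
      A x ≤ 1 / 2 * (N v) ^ 2 + 1 / (2 * q) * ‖x - v‖ ^ 2 := by
    intro x v
    rw [hA]
    exact ciInf_le (hbdd x) v
  have hAnn : ∀ x, 0 ≤ A x := by
    intro x
    rw [hA]
    exact le_ciInf (hterm x)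
  have hexists : ∀ x : EuclideanSpace ℝ (Fin d), ∀ ε > (0:ℝ),
      ∃ v, 1 / 2 * (N v) ^ 2 + 1 / (2 * q) * ‖x - v‖ ^ 2 < A x + ε := by
    intro x ε hε
    have : A x < A x + ε := by linarith
    rw [hA] at this ⊢
    exact exists_lt_of_ciInf_lt this
  -- homogeneity upper bound : A (t • x) ≤ t^2 * A x for t ≥ 0
  have hle : ∀ (t : ℝ), 0 ≤ t → ∀ x, A (t • x) ≤ t ^ 2 * A x := by
    intro t ht x
    rcases eq_or_lt_of_le ht with h0 | h0
    · have h1 := hAle ((0:ℝ) • x) 0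
      simp only [zero_smul, map_zero, sub_zero, norm_zero] at h1
      have : A ((0:ℝ) • x) ≤ 0 := by
        simpa using h1
      rw [← h0]
      simpa using this
    · have key : ∀ ε > (0:ℝ), A (t • x) ≤ t ^ 2 * A x + ε := by
        intro ε hε
        obtain ⟨v, hv⟩ := hexists x (ε / t ^ 2) (by positivity)
        have h1 : A (t • x) ≤ 1 / 2 * (N (t • v)) ^ 2 + 1 / (2 * q) * ‖t • x - t • v‖ ^ 2 :=
          hAle (t • x) (t • v)
        have hNs : N (t • v) = t * N v := by
          rw [map_smul_eq_mul]; rw [Real.norm_eq_abs, abs_of_pos h0]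
        have hns : ‖t • x - t • v‖ = t * ‖x - v‖ := by
          rw [← smul_sub, norm_smul, Real.norm_eq_abs, abs_of_pos h0]
        rw [hNs, hns] at h1
        have h2 : 1 / 2 * (t * N v) ^ 2 + 1 / (2 * q) * (t * ‖x - v‖) ^ 2
            = t ^ 2 * (1 / 2 * (N v) ^ 2 + 1 / (2 * q) * ‖x - v‖ ^ 2) := by ring
        rw [h2] at h1
        calc A (t • x) ≤ t ^ 2 * (1 / 2 * (N v) ^ 2 + 1 / (2 * q) * ‖x - v‖ ^ 2) := h1
          _ ≤ t ^ 2 * (A x + ε / t ^ 2) := by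
              apply mul_le_mul_of_nonneg_left hv.le (by positivity)
          _ = t ^ 2 * A x + ε := by field_simp
      exact le_of_forall_pos_le_add key
  -- subadditivity with ε slack
  have hsub' : ∀ (x y : EuclideanSpace ℝ (Fin d)), ∀ ε > (0:ℝ),
      2 * A (x + y) ≤ (Real.sqrt (2 * A x + ε) + Real.sqrt (2 * A y + ε)) ^ 2 := by
    intro x y ε hε
    obtain ⟨v1, hv1⟩ := hexists x (ε / 2) (by positivity)
    obtain ⟨v2, hv2⟩ := hexists y (ε / 2) (by positivity)
    have h1 : 2 * A (x + y) ≤ (N (v1 + v2)) ^ 2 + 1 / q * ‖x + y - (v1 + v2)‖ ^ 2 := by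
      have h := hAle (x + y) (v1 + v2)
      have e : 2 * (1 / 2 * (N (v1 + v2)) ^ 2 + 1 / (2 * q) * ‖x + y - (v1 + v2)‖ ^ 2)
          = (N (v1 + v2)) ^ 2 + 1 / q * ‖x + y - (v1 + v2)‖ ^ 2 := by
        field_simp
      linarith
    have hNadd : N (v1 + v2) ≤ N v1 + N v2 := map_add_le_add N v1 v2
    have hnadd : ‖x + y - (v1 + v2)‖ ≤ ‖x - v1‖ + ‖y - v2‖ := by
      have : x + y - (v1 + v2) = (x - v1) + (y - v2) := by abel
      rw [this]; exact norm_add_le _ _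
    have h2 : (N (v1 + v2)) ^ 2 + 1 / q * ‖x + y - (v1 + v2)‖ ^ 2
        ≤ (N v1 + N v2) ^ 2 + 1 / q * (‖x - v1‖ + ‖y - v2‖) ^ 2 := by
      have h3 : (N (v1 + v2)) ^ 2 ≤ (N v1 + N v2) ^ 2 :=
        pow_le_pow_left₀ (apply_nonneg N _) hNadd 2
      have h4 : ‖x + y - (v1 + v2)‖ ^ 2 ≤ (‖x - v1‖ + ‖y - v2‖) ^ 2 :=
        pow_le_pow_left₀ (norm_nonneg _) hnadd 2
      have : 0 < 1 / q := by positivity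
      nlinarith
    have h5 := minkowski2 (1 / q) (N v1) (N v2) ‖x - v1‖ ‖y - v2‖ (by positivity)
      (apply_nonneg N _) (apply_nonneg N _) (norm_nonneg _) (norm_nonneg _)
    -- identify the sqrt terms
    have e1 : (N v1) ^ 2 + 1 / q * ‖x - v1‖ ^ 2
        = 2 * (1 / 2 * (N v1) ^ 2 + 1 / (2 * q) * ‖x - v1‖ ^ 2) := by
      field_simp
    have e2 : (N v2) ^ 2 + 1 / q * ‖y - v2‖ ^ 2
        = 2 * (1 / 2 * (N v2) ^ 2 + 1 / (2 * q) * ‖y - v2‖ ^ 2) := by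
      field_simp
    have s1 : Real.sqrt ((N v1) ^ 2 + 1 / q * ‖x - v1‖ ^ 2) ≤ Real.sqrt (2 * A x + ε) := by
      apply Real.sqrt_le_sqrt
      rw [e1]; linarith
    have s2 : Real.sqrt ((N v2) ^ 2 + 1 / q * ‖y - v2‖ ^ 2) ≤ Real.sqrt (2 * A y + ε) := by
      apply Real.sqrt_le_sqrt
      rw [e2]; linarith
    have hsq : (Real.sqrt ((N v1) ^ 2 + 1 / q * ‖x - v1‖ ^ 2)
          + Real.sqrt ((N v2) ^ 2 + 1 / q * ‖y - v2‖ ^ 2)) ^ 2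
        ≤ (Real.sqrt (2 * A x + ε) + Real.sqrt (2 * A y + ε)) ^ 2 := by
      apply pow_le_pow_left₀ (by positivity)
      exact add_le_add s1 s2
    calc 2 * A (x + y) ≤ (N (v1 + v2)) ^ 2 + 1 / q * ‖x + y - (v1 + v2)‖ ^ 2 := h1
      _ ≤ (N v1 + N v2) ^ 2 + 1 / q * (‖x - v1‖ + ‖y - v2‖) ^ 2 := h2
      _ ≤ (Real.sqrt ((N v1) ^ 2 + 1 / q * ‖x - v1‖ ^ 2)
          + Real.sqrt ((N v2) ^ 2 + 1 / q * ‖y - v2‖ ^ 2)) ^ 2 := h5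
      _ ≤ _ := hsq
  -- clean subadditivity
  have hsub : ∀ x y : EuclideanSpace ℝ (Fin d),
      Real.sqrt (2 * A (x + y)) ≤ Real.sqrt (2 * A x) + Real.sqrt (2 * A y) := by
    intro x y
    apply le_of_forall_pos_le_add
    intro δ hδ
    have hε : (0:ℝ) < (δ / 2) ^ 2 := by positivity
    have h := hsub' x y ((δ / 2) ^ 2) hε
    have h1 : Real.sqrt (2 * A (x + y))
        ≤ Real.sqrt (2 * A x + (δ / 2) ^ 2) + Real.sqrt (2 * A y + (δ / 2) ^ 2) := by
      have := Real.sqrt_le_sqrt h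
      rwa [Real.sqrt_sq (by positivity)] at this
    have h2 : Real.sqrt (2 * A x + (δ / 2) ^ 2) ≤ Real.sqrt (2 * A x) + δ / 2 := by
      have := sqrt_add_le'' (2 * A x) ((δ / 2) ^ 2) (by nlinarith [hAnn x]) hε.le
      calc Real.sqrt (2 * A x + (δ / 2) ^ 2)
          ≤ Real.sqrt (2 * A x) + Real.sqrt ((δ / 2) ^ 2) := this
        _ = Real.sqrt (2 * A x) + δ / 2 := by rw [Real.sqrt_sq (by positivity)]
    have h3 : Real.sqrt (2 * A y + (δ / 2) ^ 2) ≤ Real.sqrt (2 * A y) + δ / 2 := by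
      have := sqrt_add_le'' (2 * A y) ((δ / 2) ^ 2) (by nlinarith [hAnn y]) hε.le
      calc Real.sqrt (2 * A y + (δ / 2) ^ 2)
          ≤ Real.sqrt (2 * A y) + Real.sqrt ((δ / 2) ^ 2) := this
        _ = Real.sqrt (2 * A y) + δ / 2 := by rw [Real.sqrt_sq (by positivity)]
    linarith
  -- main argument
  intro x1 x2
  set a := Real.sqrt (2 * A x1) with ha
  set b := Real.sqrt (2 * A x2) with hb
  have ha0 : 0 ≤ a := Real.sqrt_nonneg _
  have hb0 : 0 ≤ b := Real.sqrt_nonneg _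
  have ha2 : a ^ 2 = 2 * A x1 := Real.sq_sqrt (by nlinarith [hAnn x1])
  have hb2 : b ^ 2 = 2 * A x2 := Real.sq_sqrt (by nlinarith [hAnn x2])
  -- the function along the line
  set g : ℝ → ℝ := fun t => A (x1 + t • x2) with hg
  have hderiv : HasDerivAt g (inner ℝ (gradient A x1) x2 : ℝ) 0 := by
    have hgrad := (hdiff x1).hasGradientAt
    rw [hasGradientAt_iff_hasFDerivAt] at hgrad
    have hc : HasDerivAt (fun t : ℝ => x1 + t • x2) x2 0 := by
      simpa using ((hasDerivAt_id (0:ℝ)).smul_const x2).const_add x1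
    have hgrad' : HasFDerivAt A
        ((InnerProductSpace.toDual ℝ (EuclideanSpace ℝ (Fin d))) (gradient A x1))
        ((fun t : ℝ => x1 + t • x2) 0) := by
      have e : (fun t : ℝ => x1 + t • x2) 0 = x1 := by simp
      rw [e]; exact hgrad
    have hcomp := hgrad'.comp_hasDerivAt (0:ℝ) hc
    rw [InnerProductSpace.toDual_apply_apply] at hcomp
    exact hcomp
  have hslope : Tendsto (slope g 0) (𝓝[>] (0:ℝ)) (𝓝 (inner ℝ (gradient A x1) x2 : ℝ)) := by
    have := hasDerivAt_iff_tendsto_slope.mp hderiv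
    exact this.mono_left (nhdsWithin_mono 0 (fun t ht => ne_of_gt ht))
  have hbound : Tendsto (fun t : ℝ => a * b + t * (b ^ 2 / 2)) (𝓝[>] (0:ℝ)) (𝓝 (a * b)) := by
    have : Tendsto (fun t : ℝ => a * b + t * (b ^ 2 / 2)) (𝓝 (0:ℝ)) (𝓝 (a * b + 0 * (b ^ 2 / 2))) := by
      exact (tendsto_const_nhds.add ((tendsto_id).mul tendsto_const_nhds))
    simpa using this.mono_left nhdsWithin_le_nhds
  have hev : (slope g 0) ≤ᶠ[𝓝[>] (0:ℝ)] (fun t : ℝ => a * b + t * (b ^ 2 / 2)) := by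
    filter_upwards [self_mem_nhdsWithin] with t ht
    have ht0 : (0:ℝ) < t := ht
    -- s(x1 + t x2) ≤ a + t b
    have hst : Real.sqrt (2 * A (x1 + t • x2)) ≤ a + t * b := by
      have h1 := hsub x1 (t • x2)
      have h2 : Real.sqrt (2 * A (t • x2)) ≤ t * b := by
        have h3 : 2 * A (t • x2) ≤ t ^ 2 * (2 * A x2) := by
          have := hle t ht0.le x2; nlinarith
        calc Real.sqrt (2 * A (t • x2)) ≤ Real.sqrt (t ^ 2 * (2 * A x2)) :=
            Real.sqrt_le_sqrt h3
          _ = t * b := by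
            rw [Real.sqrt_mul (by positivity), Real.sqrt_sq ht0.le, hb]
      linarith
    have hgt : 2 * A (x1 + t • x2) ≤ (a + t * b) ^ 2 := by
      have := Real.sq_sqrt (by nlinarith [hAnn (x1 + t • x2)] :
        (0:ℝ) ≤ 2 * A (x1 + t • x2))
      nlinarith [hst, Real.sqrt_nonneg (2 * A (x1 + t • x2))]
    have hdiffle : g t - g 0 ≤ t * (a * b) + t ^ 2 * (b ^ 2 / 2) := by
      have hg0 : g 0 = A x1 := by simp [hg]
      have hgt' : g t = A (x1 + t • x2) := rfl
      rw [hg0, hgt']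
      nlinarith [hgt]
    rw [slope_def_field]
    rw [sub_zero]
    rw [div_le_iff₀ ht0]
    nlinarith [hdiffle]
  exact le_of_tendsto_of_tendsto hslope hbound hev
end

section
/- For all x ∈ ℝ^d, ⟨∇𝒜(x), x⟩ ≥ 2𝒜(x), where ⟨·,·⟩ is the standard inner product and ∇𝒜 is the gradient of the generalized Moreau envelope. -/
/-- for the generalized Moreau envelope, `⟨∇𝒜(x), x⟩ ≥ 2𝒜(x)` for all `x`. -/
theorem stmt_7
    (d : ℕ)
    (N : Seminorm ℝ (EuclideanSpace ℝ (Fin d))) (hNdef : ∀ x, N x = 0 → x = 0)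
    (l u : ℝ) (hl0 : 0 < l) (hl1 : l ≤ 1) (hu1 : 1 ≤ u)
    (hl : ∀ x : EuclideanSpace ℝ (Fin d), l * N x ≤ ‖x‖)
    (hu : ∀ x : EuclideanSpace ℝ (Fin d), ‖x‖ ≤ u * N x)
    (q : ℝ) (hq : 0 < q)
    (A : EuclideanSpace ℝ (Fin d) → ℝ)
    (hA : ∀ x, A x = ⨅ v : EuclideanSpace ℝ (Fin d),
      (1 / 2 * (N v) ^ 2 + 1 / (2 * q) * ‖x - v‖ ^ 2))
    (hdiff : Differentiable ℝ A) :
    ∀ x, 2 * A x ≤ (inner ℝ (gradient A x) x : ℝ) := by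
  intro x
  -- homogeneity: A (t • x) = t ^ 2 * A x for t ≠ 0
  have hom : ∀ t : ℝ, t ≠ 0 → A (t • x) = t ^ 2 * A x := by
    intro t ht
    have hsurj : Function.Surjective (fun w : EuclideanSpace ℝ (Fin d) => t • w) :=
      fun v => ⟨t⁻¹ • v, by simp [smul_smul, mul_inv_cancel₀ ht]⟩
    rw [hA, hA x, Real.mul_iInf_of_nonneg (sq_nonneg t)]
    rw [← hsurj.iInf_comp
      (g := fun v => 1 / 2 * (N v) ^ 2 + 1 / (2 * q) * ‖t • x - v‖ ^ 2)]
    refine iInf_congr fun w => ?_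
    have h1 : N (t • w) = |t| * N w := by
      rw [map_smul_eq_mul]; simp [Real.norm_eq_abs]
    have h2 : ‖t • x - t • w‖ = |t| * ‖x - w‖ := by
      rw [← smul_sub, norm_smul, Real.norm_eq_abs]
    simp only [h1, h2]
    have : |t| ^ 2 = t ^ 2 := sq_abs t
    ring_nf
    rw [sq_abs]
    ring
  -- derivative of t ↦ A (t • x) at 1
  have hg : HasGradientAt A (gradient A x) x := (hdiff x).hasGradientAt
  have hline : HasDerivAt (fun t : ℝ => t • x) x 1 := by
    simpa using (hasDerivAt_id (1 : ℝ)).smul_const x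
  have hcomp : HasDerivAt (fun t : ℝ => A (t • x))
      ((inner ℝ (gradient A x) x : ℝ)) 1 := by
    have hg' : HasFDerivAt A ((InnerProductSpace.toDual ℝ _) (gradient A x)) ((1:ℝ) • x) := by
      rw [one_smul]; exact hg.hasFDerivAt
    have := hg'.comp_hasDerivAt 1 hline
    have h3 : (InnerProductSpace.toDual ℝ _) (gradient A x) x = inner ℝ (gradient A x) x := by simp
    rw [h3] at this
    exact this
  have hpoly : HasDerivAt (fun t : ℝ => t ^ 2 * A x) (2 * A x) 1 := by
    simpa using (hasDerivAt_pow 2 (1 : ℝ)).mul_const (A x)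
  have heq : (fun t : ℝ => A (t • x)) =ᶠ[nhds (1 : ℝ)] fun t => t ^ 2 * A x := by
    filter_upwards [eventually_ne_nhds one_ne_zero] with t ht
    exact hom t ht
  have : HasDerivAt (fun t : ℝ => A (t • x)) (2 * A x) 1 :=
    hpoly.congr_of_eventuallyEq heq
  have := this.unique hcomp
  linarith
end

section
/- There exist a function V : ℝ^{d1}×ℝ^{d2}×S → ℝ^{d1} and constants K', L2 > 0 such that: (i) V solves the Poisson equation V(x,y,i) = f(x,y,i) − Σ_{j∈S} π(j) f(x,y,j) + Σ_{j∈S} p(i,j) V(x,y,j) for all x ∈ ℝ^{d1}, y ∈ ℝ^{d2}, i ∈ S; (ii) ‖V(x,y,i)‖ ≤ K'(1 + ‖x‖ + ‖y‖) for all x, y, i; (iii) ‖V(x1,y1,i) − V(x2,y2,i)‖ ≤ L2(‖x1 − x2‖ + ‖y1 − y2‖) for all x1,x2 ∈ ℝ^{d1}, y1,y2 ∈ ℝ^{d2}, i ∈ S. -/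
/-- existence of a solution of the Poisson equation for an irreducible
finite Markov chain with stationary distribution `π`, satisfying linear growth and
Lipschitz bounds. -/
theorem stmt_8
    (d1 d2 : ℕ) (S : Type) [Fintype S] [Nonempty S] [DecidableEq S]
    (P : Matrix S S ℝ)
    (hP_nonneg : ∀ i j, 0 ≤ P i j)
    (hP_row : ∀ i, ∑ j, P i j = 1)
    (hP_irred : ∀ i j, ∃ n : ℕ, 0 < (P ^ n) i j)
    (piS : S → ℝ) (hpi_nonneg : ∀ i, 0 ≤ piS i) (hpi_sum : ∑ i, piS i = 1)
    (hpi_stat : ∀ j, ∑ i, piS i * P i j = piS j)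
    (N1 : Seminorm ℝ (EuclideanSpace ℝ (Fin d1))) (hN1 : ∀ x, N1 x = 0 → x = 0)
    (N2 : Seminorm ℝ (EuclideanSpace ℝ (Fin d2))) (hN2 : ∀ y, N2 y = 0 → y = 0)
    (f : EuclideanSpace ℝ (Fin d1) → EuclideanSpace ℝ (Fin d2) → S → EuclideanSpace ℝ (Fin d1))
    (L K : ℝ) (hL : 0 < L) (hK : 0 < K)
    (hf_lip : ∀ x1 x2 y1 y2 i,
      N1 (f x1 y1 i - f x2 y2 i) ≤ L * (N1 (x1 - x2) + N2 (y1 - y2)))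
    (hf_growth : ∀ x y i, N1 (f x y i) ≤ K * (1 + N1 x + N2 y)) :
    ∃ (V : EuclideanSpace ℝ (Fin d1) → EuclideanSpace ℝ (Fin d2) → S → EuclideanSpace ℝ (Fin d1))
      (K' L2 : ℝ), 0 < K' ∧ 0 < L2 ∧
      (∀ x y i, V x y i
        = f x y i - ∑ j, piS j • f x y j + ∑ j, P i j • V x y j) ∧
      (∀ x y i, N1 (V x y i) ≤ K' * (1 + N1 x + N2 y)) ∧
      (∀ x1 x2 y1 y2 i,
        N1 (V x1 y1 i - V x2 y2 i) ≤ L2 * (N1 (x1 - x2) + N2 (y1 - y2))) := by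
  classical
  -- powers of P are nonnegative with row sums 1
  have hpow_nonneg : ∀ (n : ℕ) i j, 0 ≤ (P ^ n) i j := by
    intro n
    induction n with
    | zero =>
      intro i j
      by_cases h : i = j <;> simp [pow_zero, Matrix.one_apply, h]
    | succ n ih =>
      intro i j
      rw [pow_succ, Matrix.mul_apply]
      exact Finset.sum_nonneg fun k _ => mul_nonneg (ih i k) (hP_nonneg k j)
  have hpow_row : ∀ (n : ℕ) (i : S), ∑ j, (P ^ n) i j = 1 := by
    intro n
    induction n with
    | zero => intro i; simp [pow_zero, Matrix.one_apply]
    | succ n ih =>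
      intro i
      rw [pow_succ]
      simp only [Matrix.mul_apply]
      rw [Finset.sum_comm]
      calc ∑ k, ∑ j, (P ^ n) i k * P k j = ∑ k, (P ^ n) i k := by
            refine Finset.sum_congr rfl fun k _ => ?_
            rw [← Finset.mul_sum, hP_row k, mul_one]
        _ = 1 := ih i
  -- harmonic functions are constant
  have hharm : ∀ v : S → ℝ, P.mulVec v = v → ∀ i j, v i = v j := by
    intro v hv i j
    obtain ⟨i0, -, hi0⟩ := Finset.exists_max_image Finset.univ v Finset.univ_nonempty
    have hvn : ∀ n : ℕ, (P ^ n).mulVec v = v := by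
      intro n
      induction n with
      | zero => simp [pow_zero, Matrix.one_mulVec]
      | succ n ih => rw [pow_succ', ← Matrix.mulVec_mulVec, ih, hv]
    have key : ∀ j, v j = v i0 := by
      intro j
      obtain ⟨n, hn⟩ := hP_irred i0 j
      have hvi0 : ∑ k, (P ^ n) i0 k * v k = v i0 := by
        have := congrFun (hvn n) i0
        simpa [Matrix.mulVec, dotProduct] using this
      have hrow : ∑ k, (P ^ n) i0 k = 1 := hpow_row n i0
      have hzero : ∑ k, (P ^ n) i0 k * (v i0 - v k) = 0 := by
        have : ∑ k, (P ^ n) i0 k * (v i0 - v k)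
            = (∑ k, (P ^ n) i0 k) * v i0 - ∑ k, (P ^ n) i0 k * v k := by
          rw [Finset.sum_mul, ← Finset.sum_sub_distrib]
          exact Finset.sum_congr rfl fun k _ => by ring
        rw [this, hrow, hvi0, one_mul, sub_self]
      have hterm := (Finset.sum_eq_zero_iff_of_nonneg
        (fun k _ => mul_nonneg (hpow_nonneg n i0 k)
          (by have := hi0 k (Finset.mem_univ k); linarith))).mp hzero j (Finset.mem_univ j)
      rcases mul_eq_zero.mp hterm with h | h
      · exact absurd h (ne_of_gt hn)
      · linarith
    rw [key i, key j]
  -- the fundamental matrix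
  set U : Matrix S S ℝ := Matrix.of (fun _ j => piS j) with hU
  set A : Matrix S S ℝ := 1 - P + U with hA
  have hker : ∀ v : S → ℝ, A.mulVec v = 0 → v = 0 := by
    intro v hv
    have hAv : ∀ i, v i - ∑ j, P i j * v j + ∑ j, piS j * v j = 0 := by
      intro i
      have h0 := congrFun hv i
      simp only [hA, Matrix.add_mulVec, Matrix.sub_mulVec, Matrix.one_mulVec, Pi.add_apply,
        Pi.sub_apply, Pi.zero_apply] at h0
      have hUv : U.mulVec v i = ∑ j, piS j * v j := by
        simp [Matrix.mulVec, dotProduct, hU]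
      have hPv : P.mulVec v i = ∑ j, P i j * v j := by
        simp [Matrix.mulVec, dotProduct]
      rw [hUv, hPv] at h0
      exact h0
    set c : ℝ := ∑ j, piS j * v j with hc
    have hcz : c = 0 := by
      have hsum : ∑ i, piS i * (v i - ∑ j, P i j * v j + c) = 0 := by
        apply Finset.sum_eq_zero
        intro i _
        rw [hAv i, mul_zero]
      have h1 : ∑ i, piS i * (v i - ∑ j, P i j * v j + c)
          = c - ∑ i, piS i * ∑ j, P i j * v j + (∑ i, piS i) * c := by
        simp only [mul_sub, mul_add]
        rw [Finset.sum_add_distrib, Finset.sum_sub_distrib, ← Finset.sum_mul, ← hc]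
      have h2 : ∑ i, piS i * ∑ j, P i j * v j = c := by
        have : ∑ i, piS i * ∑ j, P i j * v j = ∑ j, (∑ i, piS i * P i j) * v j := by
          simp only [Finset.mul_sum, Finset.sum_mul]
          rw [Finset.sum_comm]
          exact Finset.sum_congr rfl fun j _ => Finset.sum_congr rfl fun i _ => by ring
        rw [this, hc]
        exact Finset.sum_congr rfl fun j _ => by rw [hpi_stat j]
      rw [h1, h2, hpi_sum, one_mul] at hsum
      linarith
    have hPv : P.mulVec v = v := by
      funext i
      have := hAv i
      rw [hcz, add_zero, sub_eq_zero] at this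
      simpa [Matrix.mulVec, dotProduct] using this.symm
    obtain i0 := Classical.arbitrary S
    have hconst := hharm v hPv
    have : c = v i0 := by
      rw [hc]
      have : ∀ j, piS j * v j = piS j * v i0 := fun j => by rw [hconst j i0]
      rw [Finset.sum_congr rfl fun j _ => this j, ← Finset.sum_mul, hpi_sum, one_mul]
    funext j
    have : v i0 = 0 := by rw [← this, hcz]
    rw [Pi.zero_apply, hconst j i0, this]
  have hdet : IsUnit A.det := by
    rw [isUnit_iff_ne_zero]
    intro hd
    obtain ⟨v, hv, hv0⟩ := Matrix.exists_mulVec_eq_zero_iff.mpr hd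
    exact hv (hker v hv0)
  set Z : Matrix S S ℝ := A⁻¹ with hZ
  have hAZ : A * Z = 1 := Matrix.mul_nonsing_inv A hdet
  have hpiA : Matrix.vecMul piS A = piS := by
    funext j
    have : Matrix.vecMul piS A j = ∑ i, piS i * A i j := by
      simp [Matrix.vecMul, dotProduct]
    rw [this]
    have hAij : ∀ i, piS i * A i j
        = piS i * (1 : Matrix S S ℝ) i j - piS i * P i j + piS i * piS j := by
      intro i
      simp [hA, hU, Matrix.sub_apply, Matrix.add_apply]
      ring
    rw [Finset.sum_congr rfl fun i _ => hAij i, Finset.sum_add_distrib, Finset.sum_sub_distrib,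
      hpi_stat j, ← Finset.sum_mul, hpi_sum, one_mul]
    have : ∑ i, piS i * (1 : Matrix S S ℝ) i j = piS j := by
      simp [Matrix.one_apply]
    rw [this]
    ring
  have hpiZ : Matrix.vecMul piS Z = piS := by
    conv_rhs => rw [← Matrix.vecMul_one piS, ← hAZ, ← Matrix.vecMul_vecMul, hpiA]
  have hZeq : Z - P * Z + U * Z = 1 := by
    have : (1 - P + U) * Z = 1 := by rw [← hA, hAZ]
    rw [add_mul, sub_mul, one_mul] at this
    exact this
  have hUZ : ∀ i k, (U * Z) i k = piS k := by
    intro i k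
    have h1 : (U * Z) i k = ∑ j, piS j * Z j k := by
      simp [Matrix.mul_apply, hU]
    have h2 : Matrix.vecMul piS Z k = ∑ j, piS j * Z j k := by
      simp [Matrix.vecMul, dotProduct]
    rw [h1, ← h2, hpiZ]
  have hZid : ∀ i k, Z i k = (1 : Matrix S S ℝ) i k + (P * Z) i k - piS k := by
    intro i k
    have h1 := congrFun (congrFun hZeq i) k
    have h2 := hUZ i k
    simp only [Matrix.add_apply, Matrix.sub_apply] at h1
    linarith [h1, h2]
  -- definitions of F, g, V
  set F : EuclideanSpace ℝ (Fin d1) → EuclideanSpace ℝ (Fin d2) → EuclideanSpace ℝ (Fin d1) :=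
    fun x y => ∑ k, piS k • f x y k with hF
  set g : EuclideanSpace ℝ (Fin d1) → EuclideanSpace ℝ (Fin d2) → S → EuclideanSpace ℝ (Fin d1) :=
    fun x y j => f x y j - F x y with hg
  set V : EuclideanSpace ℝ (Fin d1) → EuclideanSpace ℝ (Fin d2) → S → EuclideanSpace ℝ (Fin d1) :=
    fun x y i => ∑ j, Z i j • g x y j with hV
  -- the Poisson equation
  have hPoisson : ∀ x y i, V x y i
      = f x y i - (∑ j, piS j • f x y j) + ∑ j, P i j • V x y j := by
    intro x y i
    have e1 : V x y i = ∑ j, ((1 : Matrix S S ℝ) i j + (P * Z) i j - piS j) • g x y j :=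
      Finset.sum_congr rfl fun j _ => by rw [← hZid i j]
    have e2 : ∑ j, ((1 : Matrix S S ℝ) i j) • g x y j = g x y i := by
      simp [Matrix.one_apply, ite_smul]
    have e3 : ∑ j, piS j • g x y j = 0 := by
      simp only [hg, smul_sub]
      rw [Finset.sum_sub_distrib, ← Finset.sum_smul, hpi_sum, one_smul, hF, sub_self]
    have e4 : ∑ j, ((P * Z) i j) • g x y j = ∑ k, P i k • V x y k := by
      simp only [Matrix.mul_apply, Finset.sum_smul]
      rw [Finset.sum_comm]
      apply Finset.sum_congr rfl
      intro k _
      rw [hV]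
      simp only [Finset.smul_sum]
      exact Finset.sum_congr rfl fun j _ => mul_smul (P i k) (Z k j) (g x y j)
    rw [e1]
    simp only [add_smul, sub_smul, Finset.sum_add_distrib, Finset.sum_sub_distrib, e2, e3, e4]
    rw [hg]
    simp only [hF]
    abel
  -- growth and Lipschitz bounds for g
  have hD_nonneg : ∀ (x : EuclideanSpace ℝ (Fin d1)) (y : EuclideanSpace ℝ (Fin d2)),
      (0 : ℝ) ≤ 1 + N1 x + N2 y := fun x y => by
    have := apply_nonneg N1 x
    have := apply_nonneg N2 y
    linarith
  have hg_growth : ∀ x y j, N1 (g x y j) ≤ 2 * K * (1 + N1 x + N2 y) := by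
    intro x y j
    have hF_bound : N1 (F x y) ≤ K * (1 + N1 x + N2 y) := by
      rw [hF]
      calc N1 (∑ k, piS k • f x y k) ≤ ∑ k, N1 (piS k • f x y k) :=
            Finset.le_sum_of_subadditive N1 (map_zero N1).le (map_add_le_add N1) _ _
        _ = ∑ k, piS k * N1 (f x y k) := by
            refine Finset.sum_congr rfl fun k _ => ?_
            rw [map_smul_eq_mul, Real.norm_eq_abs, abs_of_nonneg (hpi_nonneg k)]
        _ ≤ ∑ k, piS k * (K * (1 + N1 x + N2 y)) := by
            refine Finset.sum_le_sum fun k _ => ?_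
            exact mul_le_mul_of_nonneg_left (hf_growth x y k) (hpi_nonneg k)
        _ = K * (1 + N1 x + N2 y) := by rw [← Finset.sum_mul, hpi_sum, one_mul]
    calc N1 (g x y j) ≤ N1 (f x y j) + N1 (F x y) := map_sub_le_add N1 _ _
      _ ≤ K * (1 + N1 x + N2 y) + K * (1 + N1 x + N2 y) := by
          have := hf_growth x y j; linarith
      _ = 2 * K * (1 + N1 x + N2 y) := by ring
  have hg_lip : ∀ x1 x2 y1 y2 j,
      N1 (g x1 y1 j - g x2 y2 j) ≤ 2 * L * (N1 (x1 - x2) + N2 (y1 - y2)) := by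
    intro x1 x2 y1 y2 j
    have hFdiff : F x1 y1 - F x2 y2 = ∑ k, piS k • (f x1 y1 k - f x2 y2 k) := by
      rw [hF]
      simp only [smul_sub]
      rw [Finset.sum_sub_distrib]
    have hF_bound : N1 (F x1 y1 - F x2 y2) ≤ L * (N1 (x1 - x2) + N2 (y1 - y2)) := by
      rw [hFdiff]
      calc N1 (∑ k, piS k • (f x1 y1 k - f x2 y2 k))
          ≤ ∑ k, N1 (piS k • (f x1 y1 k - f x2 y2 k)) :=
            Finset.le_sum_of_subadditive N1 (map_zero N1).le (map_add_le_add N1) _ _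
        _ = ∑ k, piS k * N1 (f x1 y1 k - f x2 y2 k) := by
            refine Finset.sum_congr rfl fun k _ => ?_
            rw [map_smul_eq_mul, Real.norm_eq_abs, abs_of_nonneg (hpi_nonneg k)]
        _ ≤ ∑ k, piS k * (L * (N1 (x1 - x2) + N2 (y1 - y2))) := by
            refine Finset.sum_le_sum fun k _ => ?_
            exact mul_le_mul_of_nonneg_left (hf_lip x1 x2 y1 y2 k) (hpi_nonneg k)
        _ = L * (N1 (x1 - x2) + N2 (y1 - y2)) := by rw [← Finset.sum_mul, hpi_sum, one_mul]
    have hgdiff : g x1 y1 j - g x2 y2 j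
        = (f x1 y1 j - f x2 y2 j) - (F x1 y1 - F x2 y2) := by
      rw [hg]; exact sub_sub_sub_comm _ _ _ _
    calc N1 (g x1 y1 j - g x2 y2 j)
        ≤ N1 (f x1 y1 j - f x2 y2 j) + N1 (F x1 y1 - F x2 y2) := by
          rw [hgdiff]; exact map_sub_le_add N1 _ _
      _ ≤ L * (N1 (x1 - x2) + N2 (y1 - y2)) + L * (N1 (x1 - x2) + N2 (y1 - y2)) := by
          have := hf_lip x1 x2 y1 y2 j; linarith
      _ = 2 * L * (N1 (x1 - x2) + N2 (y1 - y2)) := by ring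
  -- the constant C bounding row absolute sums of Z
  set C : ℝ := (∑ i, ∑ j, |Z i j|) + 1 with hCdef
  have hC_pos : 0 < C := by
    have : (0 : ℝ) ≤ ∑ i, ∑ j, |Z i j| :=
      Finset.sum_nonneg fun i _ => Finset.sum_nonneg fun j _ => abs_nonneg _
    rw [hCdef]; linarith
  have hrowC : ∀ i, ∑ j, |Z i j| ≤ C := by
    intro i
    have h1 : ∑ j, |Z i j| ≤ ∑ i', ∑ j, |Z i' j| :=
      Finset.single_le_sum (f := fun i' => ∑ j, |Z i' j|)
        (fun i' _ => Finset.sum_nonneg fun j _ => abs_nonneg _) (Finset.mem_univ i)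
    rw [hCdef]; linarith
  -- bounds on V
  have hV_bound : ∀ (x : EuclideanSpace ℝ (Fin d1)) (y : EuclideanSpace ℝ (Fin d2)) (i : S)
      (M : ℝ), 0 ≤ M → (∀ j, N1 (g x y j) ≤ M) → N1 (V x y i) ≤ C * M := by
    intro x y i M hM hgb
    calc N1 (V x y i) ≤ ∑ j, N1 (Z i j • g x y j) :=
          Finset.le_sum_of_subadditive N1 (map_zero N1).le (map_add_le_add N1) _ _
      _ = ∑ j, |Z i j| * N1 (g x y j) := by
          refine Finset.sum_congr rfl fun j _ => ?_
          rw [map_smul_eq_mul, Real.norm_eq_abs]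
      _ ≤ ∑ j, |Z i j| * M := by
          refine Finset.sum_le_sum fun j _ => ?_
          exact mul_le_mul_of_nonneg_left (hgb j) (abs_nonneg _)
      _ = (∑ j, |Z i j|) * M := by rw [Finset.sum_mul]
      _ ≤ C * M := mul_le_mul_of_nonneg_right (hrowC i) hM
  refine ⟨V, 2 * K * C, 2 * L * C, by positivity, by positivity, hPoisson, ?_, ?_⟩
  · intro x y i
    have := hV_bound x y i (2 * K * (1 + N1 x + N2 y))
      (by have := hD_nonneg x y; positivity) (hg_growth x y)
    calc N1 (V x y i) ≤ C * (2 * K * (1 + N1 x + N2 y)) := this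
      _ = 2 * K * C * (1 + N1 x + N2 y) := by ring
  · intro x1 x2 y1 y2 i
    have hVdiff : V x1 y1 i - V x2 y2 i = ∑ j, Z i j • (g x1 y1 j - g x2 y2 j) := by
      rw [hV]
      simp only [smul_sub]
      rw [Finset.sum_sub_distrib]
    have hM : (0 : ℝ) ≤ 2 * L * (N1 (x1 - x2) + N2 (y1 - y2)) := by
      have := apply_nonneg N1 (x1 - x2)
      have := apply_nonneg N2 (y1 - y2)
      positivity
    calc N1 (V x1 y1 i - V x2 y2 i)
        ≤ ∑ j, N1 (Z i j • (g x1 y1 j - g x2 y2 j)) := by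
          rw [hVdiff]
          exact Finset.le_sum_of_subadditive N1 (map_zero N1).le (map_add_le_add N1) _ _
      _ = ∑ j, |Z i j| * N1 (g x1 y1 j - g x2 y2 j) := by
          refine Finset.sum_congr rfl fun j _ => ?_
          rw [map_smul_eq_mul, Real.norm_eq_abs]
      _ ≤ ∑ j, |Z i j| * (2 * L * (N1 (x1 - x2) + N2 (y1 - y2))) := by
          refine Finset.sum_le_sum fun j _ => ?_
          exact mul_le_mul_of_nonneg_left (hg_lip x1 x2 y1 y2 j) (abs_nonneg _)
      _ = (∑ j, |Z i j|) * (2 * L * (N1 (x1 - x2) + N2 (y1 - y2))) := by rw [Finset.sum_mul]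
      _ ≤ C * (2 * L * (N1 (x1 - x2) + N2 (y1 - y2))) := mul_le_mul_of_nonneg_right (hrowC i) hM
      _ = 2 * L * C * (N1 (x1 - x2) + N2 (y1 - y2)) := by ring
end

section
/- Suppose there exist constants L1', L2' with 0 < L1' ≤ L2' such that for all ρ1 ≥ ρ2, −L2'(ρ1 − ρ2) ≤ min_v Q*(ρ1)(i0,v) − min_v Q*(ρ2)(i0,v) ≤ −L1'(ρ1 − ρ2). Then for every β' with 0 < β' < 1/L2', letting μ = max{1 − β'L1', 1 − β'L2'} ∈ (0,1), it holds that |ḡ(Q*(ρ1),ρ1) − ḡ(Q*(ρ2),ρ2)| ≤ μ|ρ1 − ρ2| for all ρ1, ρ2 ∈ ℝ; i.e., ρ ↦ ḡ(Q*(ρ),ρ) is a μ-contraction. -/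
/-- for SSP Q-learning, if `ρ ↦ min_v Q*(ρ)(i0,v)` decreases at a rate
between `-L2'` and `-L1'` (with `0 < L1' ≤ L2'`), then for every `β' ∈ (0, 1/L2')` the
map `ρ ↦ ḡ(Q*(ρ),ρ) = β' min_v Q*(ρ)(i0,v) + ρ` is a `μ`-contraction with
`μ = max{1 - β'L1', 1 - β'L2'} ∈ (0,1)`. -/
theorem stmt_10
    (S' U : Type) [Fintype S'] [Fintype U] [Nonempty S'] [Nonempty U] [DecidableEq S']
    (k : S' × U → ℝ) (i0 : S')
    (p : S' → U → S' → ℝ)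
    (hp_nonneg : ∀ i u j, 0 ≤ p i u j) (hp_sum : ∀ i u, ∑ j, p i u j = 1)
    (piD : S' × U → ℝ) (hpi_sum : ∑ iu, piD iu = 1) (hpi_pos : ∀ iu, 0 < piD iu)
    (w : S' × U → ℝ) (hw : ∀ iu, 0 < w iu)
    (f0 : (S' × U → ℝ) → (S' × U → ℝ))
    (hf0 : ∀ Q iu, f0 Q iu
      = k iu + ∑ j ∈ Finset.univ \ {i0}, p iu.1 iu.2 j * (⨅ v : U, Q (j, v)))
    (fbar : (S' × U → ℝ) → ℝ → (S' × U → ℝ))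
    (hfbar : ∀ Q ρ iu, fbar Q ρ iu = (1 - piD iu) * Q iu + piD iu * (f0 Q iu - ρ))
    (lam0 : ℝ) (hlam00 : 0 ≤ lam0) (hlam01 : lam0 < 1)
    (hcontr : ∀ Q1 Q2, (⨆ iu, w iu * |(f0 Q1 - f0 Q2) iu|)
      ≤ lam0 * ⨆ iu, w iu * |(Q1 - Q2) iu|)
    (Qstar : ℝ → (S' × U → ℝ))
    (hQstar : ∀ ρ, fbar (Qstar ρ) ρ = Qstar ρ)
    (L1' L2' : ℝ) (hL1' : 0 < L1') (hL12 : L1' ≤ L2')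
    (hmono : ∀ ρ1 ρ2, ρ2 ≤ ρ1 →
      -L2' * (ρ1 - ρ2) ≤ (⨅ v : U, Qstar ρ1 (i0, v)) - (⨅ v : U, Qstar ρ2 (i0, v)) ∧
      (⨅ v : U, Qstar ρ1 (i0, v)) - (⨅ v : U, Qstar ρ2 (i0, v)) ≤ -L1' * (ρ1 - ρ2)) :
    ∀ β' : ℝ, 0 < β' → β' < 1 / L2' →
      0 < max (1 - β' * L1') (1 - β' * L2') ∧
      max (1 - β' * L1') (1 - β' * L2') < 1 ∧
      ∀ ρ1 ρ2 : ℝ,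
        |(β' * (⨅ v : U, Qstar ρ1 (i0, v)) + ρ1) - (β' * (⨅ v : U, Qstar ρ2 (i0, v)) + ρ2)|
          ≤ max (1 - β' * L1') (1 - β' * L2') * |ρ1 - ρ2| :=  by
  intro β' hβ0 hβ2
  have hL2 : 0 < L2' := lt_of_lt_of_le hL1' hL12
  have hβL2 : β' * L2' < 1 := by
    have := (lt_div_iff₀ hL2).mp hβ2
    linarith
  have hβL1 : β' * L1' ≤ β' * L2' := by nlinarith
  have hmax : max (1 - β' * L1') (1 - β' * L2') = 1 - β' * L1' := by
    apply max_eq_left; linarith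
  rw [hmax]
  refine ⟨by linarith, by nlinarith, ?_⟩
  have key : ∀ ρ1 ρ2 : ℝ, ρ2 ≤ ρ1 →
      |(β' * (⨅ v : U, Qstar ρ1 (i0, v)) + ρ1) - (β' * (⨅ v : U, Qstar ρ2 (i0, v)) + ρ2)|
        ≤ (1 - β' * L1') * |ρ1 - ρ2| := by
    intro ρ1 ρ2 h
    obtain ⟨h1, h2⟩ := hmono ρ1 ρ2 h
    have hd : 0 ≤ ρ1 - ρ2 := by linarith
    rw [abs_of_nonneg hd, abs_le]
    constructor
    · nlinarith [mul_le_mul_of_nonneg_left h1 hβ0.le]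
    · nlinarith [mul_le_mul_of_nonneg_left h2 hβ0.le]
  intro ρ1 ρ2
  rcases le_total ρ2 ρ1 with h | h
  · exact key ρ1 ρ2 h
  · have := key ρ2 ρ1 h
    rw [abs_sub_comm, abs_sub_comm ρ1 ρ2]
    exact this
end

section
/- For each y ∈ ℝ^c let x*(y) denote the unique x ∈ ℝ^n with F(x) = Aᵀy. Then there exist β' > 0 and μ ∈ (0,1) such that the map y ↦ y + β'(A·x*(y) − b) is a μ-contraction on ℝ^c under the Euclidean norm: ‖y1 + β'(Ax*(y1) − b) − y2 − β'(Ax*(y2) − b)‖₂ ≤ μ‖y1 − y2‖₂ for all y1, y2 ∈ ℝ^c. -/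
set_option maxHeartbeats 1000000


/-- under strong monotonicity and Lipschitzness of `F`, full row rank of
`A`, and with `x*(y)` the unique solution of `F(x) = Aᵀy`, there exist `β' > 0` and
`μ ∈ (0,1)` such that `y ↦ y + β'(A x*(y) - b)` is a `μ`-contraction in the Euclidean
norm. -/
theorem stmt_12
    (n c : ℕ) (F : EuclideanSpace ℝ (Fin n) → EuclideanSpace ℝ (Fin n))
    (lam0 ell : ℝ) (hlam0 : 0 < lam0) (hell : lam0 ≤ ell)
    (hmono : ∀ x1 x2, (inner ℝ (x2 - x1) (F x2 - F x1) : ℝ) ≤ -lam0 * ‖x2 - x1‖ ^ 2)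
    (hlip : ∀ x1 x2, ‖F x2 - F x1‖ ≤ ell * ‖x2 - x1‖)
    (A : Matrix (Fin c) (Fin n) ℝ) (hA : A.rank = c)
    (b : EuclideanSpace ℝ (Fin c))
    (xstar : EuclideanSpace ℝ (Fin c) → EuclideanSpace ℝ (Fin n))
    (hxstar : ∀ y, F (xstar y) = Matrix.toEuclideanLin A.transpose y)
    (hxstar_uniq : ∀ y x, F x = Matrix.toEuclideanLin A.transpose y → x = xstar y) :
    ∃ β' : ℝ, 0 < β' ∧ ∃ μ : ℝ, 0 < μ ∧ μ < 1 ∧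
      ∀ y1 y2,
        ‖y1 + β' • (Matrix.toEuclideanLin A (xstar y1) - b)
          - (y2 + β' • (Matrix.toEuclideanLin A (xstar y2) - b))‖ ≤ μ * ‖y1 - y2‖ := by
  have hell0 : 0 < ell := lt_of_lt_of_le hlam0 hell
  set L : EuclideanSpace ℝ (Fin n) →ₗ[ℝ] EuclideanSpace ℝ (Fin c) := Matrix.toEuclideanLin A
  set T : EuclideanSpace ℝ (Fin c) →ₗ[ℝ] EuclideanSpace ℝ (Fin n) :=
    Matrix.toEuclideanLin A.transpose
  -- adjoint identity
  have hadj : ∀ (x : EuclideanSpace ℝ (Fin n)) (y : EuclideanSpace ℝ (Fin c)),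
      (inner ℝ (L x) y : ℝ) = inner ℝ x (T y) := by
    intro x y
    have h1 : T = LinearMap.adjoint L := by
      rw [← Matrix.toEuclideanLin_conjTranspose_eq_adjoint]
      simp [T, Matrix.conjTranspose_eq_transpose_of_trivial]
    rw [h1, LinearMap.adjoint_inner_right]
  -- T is injective (full row rank)
  have hkermul : LinearMap.ker (Matrix.mulVecLin A.transpose) = ⊥ := by
    have hrn := LinearMap.finrank_range_add_finrank_ker (Matrix.mulVecLin A.transpose)
    have hrank : A.transpose.rank = c := by rw [Matrix.rank_transpose]; exact hA
    have hdom : Module.finrank ℝ (Fin c → ℝ) = c := by simp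
    rw [hdom] at hrn
    have : Module.finrank ℝ (LinearMap.range (Matrix.mulVecLin A.transpose)) = c := hrank
    have hker0 : Module.finrank ℝ (LinearMap.ker (Matrix.mulVecLin A.transpose)) = 0 := by
      omega
    exact Submodule.finrank_eq_zero.mp hker0
  have hTinj : LinearMap.ker T = ⊥ := by
    rw [LinearMap.ker_eq_bot]
    intro u v h
    have h2 : Matrix.mulVecLin A.transpose ((WithLp.equiv 2 _) u)
        = Matrix.mulVecLin A.transpose ((WithLp.equiv 2 _) v) := by
      have := congrArg (WithLp.equiv 2 (Fin n → ℝ)) h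
      exact this
    have h3 := LinearMap.ker_eq_bot.mp hkermul h2
    exact (WithLp.equiv 2 (Fin c → ℝ)).injective h3
  obtain ⟨K, hK0, hKa⟩ := LinearMap.exists_antilipschitzWith T hTinj
  -- operator norm bound for L
  set Lc := LinearMap.toContinuousLinearMap L
  set C : ℝ := ‖Lc‖ + 1 with hC
  have hC0 : 0 < C := by positivity
  have hLC : ∀ d, ‖L d‖ ≤ C * ‖d‖ := by
    intro d
    have := Lc.le_opNorm d
    have h2 : ‖Lc‖ * ‖d‖ ≤ C * ‖d‖ := by
      apply mul_le_mul_of_nonneg_right (by simp [hC]) (norm_nonneg d)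
    exact le_trans this h2
  set β' : ℝ := lam0 / C ^ 2 with hβ
  have hβ0 : 0 < β' := by positivity
  set ε : ℝ := lam0 ^ 2 / (C ^ 2 * (K : ℝ) ^ 2 * ell ^ 2) with hε
  have hKpos : (0 : ℝ) < (K : ℝ) := hK0
  have hε0 : 0 < ε := by positivity
  set ε' : ℝ := min ε (1 / 2) with hε'
  have hε'0 : 0 < ε' := lt_min hε0 (by norm_num)
  have hε'le : ε' ≤ 1 / 2 := min_le_right _ _
  refine ⟨β', hβ0, Real.sqrt (1 - ε'), Real.sqrt_pos.mpr (by linarith), ?_, ?_⟩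
  · have : 1 - ε' < 1 := by linarith
    calc Real.sqrt (1 - ε') < Real.sqrt 1 := by
          exact Real.sqrt_lt_sqrt (by linarith) this
      _ = 1 := Real.sqrt_one
  intro y1 y2
  set v : EuclideanSpace ℝ (Fin c) := y1 - y2 with hv
  set d : EuclideanSpace ℝ (Fin n) := xstar y1 - xstar y2 with hd
  -- rewrite the LHS
  have hlhs : y1 + β' • (Matrix.toEuclideanLin A (xstar y1) - b)
      - (y2 + β' • (Matrix.toEuclideanLin A (xstar y2) - b)) = v + β' • L d := by
    simp only [hv, hd, map_sub, smul_sub]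
    abel
  rw [hlhs]
  -- key facts
  have hTv : T v = F (xstar y1) - F (xstar y2) := by
    rw [hv, map_sub, ← hxstar, ← hxstar]
  have hlip' : ‖T v‖ ≤ ell * ‖d‖ := by rw [hTv]; exact hlip (xstar y2) (xstar y1)
  have hvd : ‖v‖ ≤ K * (ell * ‖d‖) := by
    have h1 : ‖v‖ ≤ K * ‖T v‖ := by
      have := hKa.le_mul_dist v 0
      simpa [dist_eq_norm] using this
    exact h1.trans (by
      apply mul_le_mul_of_nonneg_left hlip' (le_of_lt hKpos))
  have hmono' : (inner ℝ d (T v) : ℝ) ≤ -lam0 * ‖d‖ ^ 2 := by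
    have := hmono (xstar y2) (xstar y1)
    rw [hTv]
    simpa [hd] using this
  have hinner : (inner ℝ v (β' • L d) : ℝ) ≤ β' * (-lam0 * ‖d‖ ^ 2) := by
    rw [real_inner_smul_right]
    have h1 : (inner ℝ v (L d) : ℝ) = inner ℝ d (T v) := by
      rw [real_inner_comm, hadj]
    rw [h1]
    exact mul_le_mul_of_nonneg_left hmono' (le_of_lt hβ0)
  have hnorm2 : ‖β' • L d‖ ^ 2 ≤ β' ^ 2 * (C ^ 2 * ‖d‖ ^ 2) := by
    rw [norm_smul]
    have h1 : ‖L d‖ ^ 2 ≤ C ^ 2 * ‖d‖ ^ 2 := by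
      have := hLC d
      nlinarith [norm_nonneg (L d), norm_nonneg d]
    have h2 : ‖(β' : ℝ)‖ = β' := abs_of_pos hβ0
    rw [h2, mul_pow]
    nlinarith [sq_nonneg β']
  -- expand square
  have hsq : ‖v + β' • L d‖ ^ 2 ≤ ‖v‖ ^ 2 - β' * lam0 * ‖d‖ ^ 2 := by
    have hexp := norm_add_sq_real v (β' • L d)
    have hβC : β' ^ 2 * C ^ 2 = β' * lam0 := by
      field_simp [hβ]
      rw [hβ]
      field_simp
    have : β' ^ 2 * (C ^ 2 * ‖d‖ ^ 2) = β' * lam0 * ‖d‖ ^ 2 := by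
      rw [← mul_assoc, hβC]
    nlinarith [hnorm2, hinner]
  have hdv : ‖v‖ ^ 2 ≤ (K : ℝ) ^ 2 * ell ^ 2 * ‖d‖ ^ 2 := by
    nlinarith [norm_nonneg v, norm_nonneg d, hvd, hKpos, hell0]
  have hfinal : ‖v + β' • L d‖ ^ 2 ≤ (1 - ε') * ‖v‖ ^ 2 := by
    have hεv : ε * ‖v‖ ^ 2 ≤ β' * lam0 * ‖d‖ ^ 2 := by
      have h1 : ε * ((K : ℝ) ^ 2 * ell ^ 2 * ‖d‖ ^ 2) = β' * lam0 * ‖d‖ ^ 2 := by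
        rw [hε, hβ]
        field_simp
      nlinarith [hdv, hε0]
    have h2 : ε' * ‖v‖ ^ 2 ≤ ε * ‖v‖ ^ 2 := by
      apply mul_le_mul_of_nonneg_right (min_le_left _ _) (sq_nonneg _)
    nlinarith [hsq]
  -- take square roots
  have h1mε : (0:ℝ) ≤ 1 - ε' := by linarith
  calc ‖v + β' • L d‖ = Real.sqrt (‖v + β' • L d‖ ^ 2) := by
        rw [Real.sqrt_sq (norm_nonneg _)]
    _ ≤ Real.sqrt ((1 - ε') * ‖v‖ ^ 2) := Real.sqrt_le_sqrt hfinal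
    _ = Real.sqrt (1 - ε') * ‖v‖ := by
        rw [Real.sqrt_mul h1mε, Real.sqrt_sq (norm_nonneg _)]
end
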